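/- arXiv:0903.3843 — 2 statements merged into one kernel-verified Lean document; each statement's English description precedes it below -/
import Mathlib

section
/- Let E : ℝ≥0 → ℝ≥0 be a non-increasing function and suppose there exists C > 0 such that for all t ≥ 0, ∫_t^∞ E(s) ds ≤ C·E(t). Then for all t ≥ C, E(t) ≤ E(0)·exp(1 − t/C). -/
/-!
Komornik's argument. The tail `F t = ∫_t^∞ E` loses at least `h E(t+h) ≥ h F(t+h) / C` between
`t` and `t + h`, so `F (t + h) ≤ C / (C + h) * F t`. Iterating with `h = t / n` and letting
`n → ∞` gives `F t ≤ exp (-t / C) * F 0`. Finally monotonicity gives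
`C E(t) ≤ ∫_{t-C}^t E ≤ F (t - C) ≤ exp (1 - t / C) * F 0 ≤ exp (1 - t / C) * C E(0)`.
-/

open MeasureTheory Set Filter Topology

theorem AntitoneOn.sub_mul_le_intervalIntegral {f : ℝ → ℝ} {a b : ℝ} (hab : a ≤ b)
    (hf : AntitoneOn f (Icc a b)) : (b - a) * f b ≤ ∫ x in a..b, f x := by
  calc (b - a) * f b = ∫ _ in a..b, f b := by simp
    _ ≤ ∫ x in a..b, f x :=
      intervalIntegral.integral_mono_on hab intervalIntegrable_const
        (uIcc_of_le hab ▸ hf).intervalIntegrable fun x hx => hf hx (right_mem_Icc.2 hab) hx.2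

theorem le_pow_mul_of_forall_add_le {F : ℝ → ℝ} {h r : ℝ} (hh : 0 ≤ h) (hr : 0 ≤ r)
    (hstep : ∀ t, 0 ≤ t → F (t + h) ≤ r * F t) (n : ℕ) : F (n * h) ≤ r ^ n * F 0 := by
  induction n with
  | zero => simp
  | succ n ih =>
    calc F ((n + 1 : ℕ) * h) = F (n * h + h) := by push_cast; ring_nf
      _ ≤ r * F (n * h) := hstep _ (by positivity)
      _ ≤ r ^ (n + 1) * F 0 := by rw [pow_succ', mul_assoc]; gcongr

theorem le_exp_mul_of_forall_add_mul_le {F : ℝ → ℝ} {C : ℝ} (hC : 0 < C)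
    (hstep : ∀ t h, 0 ≤ t → 0 ≤ h → (C + h) * F (t + h) ≤ C * F t) {t : ℝ} (ht : 0 ≤ t) :
    F t ≤ Real.exp (-(t / C)) * F 0 := by
  have hbound : ∀ n : ℕ, 0 < n → F t ≤ ((1 + t / C / n) ^ n)⁻¹ * F 0 := by
    intro n hn
    have hn : (0 : ℝ) < n := by exact_mod_cast hn
    have hratio : C / (C + t / n) = (1 + t / C / n)⁻¹ := by field_simp
    have hiter := le_pow_mul_of_forall_add_le (h := t / n) (by positivity)
      (by positivity : 0 ≤ C / (C + t / n)) (fun s hs => by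
        rw [div_mul_eq_mul_div, le_div_iff₀ (by positivity), mul_comm]
        exact hstep s _ hs (by positivity)) n
    rwa [mul_div_cancel₀ t hn.ne', hratio, inv_pow] at hiter
  have hlim : Tendsto (fun n : ℕ => ((1 + t / C / n) ^ n)⁻¹ * F 0) atTop
      (𝓝 (Real.exp (-(t / C)) * F 0)) := by
    rw [Real.exp_neg]
    exact ((Real.tendsto_one_add_div_pow_exp _).inv₀ (Real.exp_ne_zero _)).mul_const _
  exact ge_of_tendsto hlim (eventually_atTop.2 ⟨1, hbound⟩)

theorem add_mul_integral_Ioi_add_le {E : ℝ → ℝ} {C t s : ℝ} (hC : 0 ≤ C) (hs : 0 ≤ s)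
    (hmono : AntitoneOn E (Icc t (t + s))) (hint : IntegrableOn E (Ioi t))
    (htail : ∫ x in Ioi (t + s), E x ≤ C * E (t + s)) :
    (C + s) * ∫ x in Ioi (t + s), E x ≤ C * ∫ x in Ioi t, E x := by
  have hst : t ≤ t + s := le_add_of_nonneg_right hs
  have hlower := hmono.sub_mul_le_intervalIntegral hst
  rw [add_sub_cancel_left, ← intervalIntegral.integral_Ioi_sub_Ioi hint hst] at hlower
  nlinarith [mul_le_mul_of_nonneg_left htail hs, mul_le_mul_of_nonneg_left hlower hC]

/-- Komornik's integral lemma, exponential case (α = 0). -/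
theorem stmt0 (E : ℝ → ℝ) (hpos : ∀ t, 0 ≤ E t)
    (hmono : AntitoneOn E (Ici (0 : ℝ)))
    (hint : ∀ t, 0 ≤ t → IntegrableOn E (Ioi t))
    (C : ℝ) (hC : 0 < C)
    (h : ∀ t, 0 ≤ t → (∫ s in Ioi t, E s) ≤ C * E t) :
    ∀ t, C ≤ t → E t ≤ E 0 * Real.exp (1 - t / C) := by
  have hmonoIcc : ∀ {a b : ℝ}, 0 ≤ a → AntitoneOn E (Icc a b) := fun ha =>
    hmono.mono (Icc_subset_Ici_self.trans (Ici_subset_Ici.2 ha))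
  have hdecay : ∀ t, 0 ≤ t → ∫ x in Ioi t, E x ≤ Real.exp (-(t / C)) * ∫ x in Ioi 0, E x :=
    fun t ht => le_exp_mul_of_forall_add_mul_le (F := fun t => ∫ x in Ioi t, E x) hC
      (fun t s ht hs => add_mul_integral_Ioi_add_le hC.le hs (hmonoIcc ht) (hint t ht)
        (h _ (by positivity))) ht
  intro t htC
  have ha : 0 ≤ t - C := by linarith
  have hlower := (hmonoIcc ha).sub_mul_le_intervalIntegral (sub_le_self t hC.le)
  rw [sub_sub_cancel, ← intervalIntegral.integral_Ioi_sub_Ioi (hint _ ha) (sub_le_self _ hC.le)]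
    at hlower
  have htail_nonneg : 0 ≤ ∫ x in Ioi t, E x :=
    setIntegral_nonneg measurableSet_Ioi fun x _ => hpos x
  have hexp : Real.exp (-((t - C) / C)) = Real.exp (1 - t / C) := by congr 1; field_simp; ring
  have hCE : C * E t ≤ C * (E 0 * Real.exp (1 - t / C)) :=
    calc C * E t ≤ ∫ x in Ioi (t - C), E x := by linarith
      _ ≤ Real.exp (-((t - C) / C)) * ∫ x in Ioi 0, E x := hdecay _ ha
      _ ≤ Real.exp (-((t - C) / C)) * (C * E 0) := by gcongr; exact h 0 le_rfl
      _ = C * (E 0 * Real.exp (1 - t / C)) := by rw [hexp]; ring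
  exact le_of_mul_le_mul_left hCE hC
end

section
/- Let n ≥ 1, d > 0, A a skew-symmetric n×n real matrix, x₀ ∈ ℝⁿ, and F ∈ W^{1,∞}(Ω; ℝⁿ) with ess sup_Ω ‖(∇F)^s‖ < d/n, where ‖·‖ is the spectral (operator 2-)norm. Then m(x) = (dI + A)(x − x₀) + F(x) satisfies ess inf_Ω div(m) > ess sup_Ω (div(m) − 2λ_m). -/
open MeasureTheory Real Set Matrix

noncomputable section

abbrev Euc (n : ℕ) := EuclideanSpace ℝ (Fin n)

/-- The divergence of a vector field: the trace of its Jacobian. -/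
def vdiv {n : ℕ} (m : Euc n → Euc n) (x : Euc n) : ℝ :=
  LinearMap.trace ℝ (Euc n) (fderiv ℝ m x).toLinearMap

/-- The smallest eigenvalue `λ_m(x)` of the symmetric part of the Jacobian of `m` at `x`,
expressed as the infimum of the Rayleigh quotient over the unit sphere. -/
def lamMin {n : ℕ} (m : Euc n → Euc n) (x : Euc n) : ℝ :=
  ⨅ v : Metric.sphere (0 : Euc n) 1, (inner ℝ (fderiv ℝ m x (v : Euc n)) (v : Euc n) : ℝ)

/-- The cone condition: `ess inf_Ω div(m) > ess sup_Ω (div(m) - 2 λ_m)`. -/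
def coneCond {n : ℕ} (m : Euc n → Euc n) (Ω : Set (Euc n)) : Prop :=
  essSup (fun x => vdiv m x - 2 * lamMin m x) (volume.restrict Ω) <
    essInf (fun x => vdiv m x) (volume.restrict Ω)

/-- `c(m) = (1/2)(ess inf_Ω div(m) - ess sup_Ω (div(m) - 2 λ_m))`. -/
def cConst {n : ℕ} (m : Euc n → Euc n) (Ω : Set (Euc n)) : ℝ :=
  (1/2) * (essInf (fun x => vdiv m x) (volume.restrict Ω) -
    essSup (fun x => vdiv m x - 2 * lamMin m x) (volume.restrict Ω))

/-- `a₀ = (1/2)(ess inf_Ω div(m) + ess sup_Ω (div(m) - 2 λ_m))`. -/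
def a0Const {n : ℕ} (m : Euc n → Euc n) (Ω : Set (Euc n)) : ℝ :=
  (1/2) * (essInf (fun x => vdiv m x) (volume.restrict Ω) +
    essSup (fun x => vdiv m x - 2 * lamMin m x) (volume.restrict Ω))

/-- The Laplacian as the divergence of the gradient. -/
def lap {n : ℕ} (f : Euc n → ℝ) (x : Euc n) : ℝ := vdiv (fun y => gradient f y) x

/-!
Since `A` is skew, `⟪∇m v, v⟫ = d + ⟪(∇F)ˢ v, v⟫` for unit `v`, so a.e. on `Ω` every Rayleigh
quotient of `∇m` lies in `[d - s, d + s]`, where `s = ess sup ‖(∇F)ˢ‖ < d / n`. Summing over an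
orthonormal basis gives `div m ≥ n (d - s)`, while computing the trace in an orthonormal basis
through an arbitrary unit vector `v` gives `div m ≤ ⟪∇m v, v⟫ + (n - 1)(d + s)`, hence
`div m - 2 λ_m ≤ (n - 1)(d + s) - (d - s)`. The two bounds differ by `2 (d - n s) > 0`.
-/

open Module Filter
open scoped InnerProductSpace

section RayleighQuotient

variable {E : Type*} [NormedAddCommGroup E] [InnerProductSpace ℝ E]

lemma inner_symmPart_apply_self [CompleteSpace E] (T : E →L[ℝ] E) (v : E) :
    ⟪((1/2 : ℝ) • (T + ContinuousLinearMap.adjoint T)) v, v⟫_ℝ = ⟪T v, v⟫_ℝ := by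
  simp only [_root_.smul_apply, _root_.add_apply, real_inner_smul_left, inner_add_left,
    ContinuousLinearMap.adjoint_inner_left, real_inner_comm v (T v)]
  ring

lemma abs_inner_apply_self_le_norm_symmPart [CompleteSpace E] (T : E →L[ℝ] E) {v : E}
    (hv : ‖v‖ = 1) :
    |⟪T v, v⟫_ℝ| ≤ ‖(1/2 : ℝ) • (T + ContinuousLinearMap.adjoint T)‖ := by
  rw [← inner_symmPart_apply_self]
  calc _ ≤ ‖((1/2 : ℝ) • (T + ContinuousLinearMap.adjoint T)) v‖ * ‖v‖ :=
        abs_real_inner_le_norm _ _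
    _ ≤ ‖(1/2 : ℝ) • (T + ContinuousLinearMap.adjoint T)‖ * ‖v‖ * ‖v‖ := by
        gcongr; exact ContinuousLinearMap.le_opNorm _ _
    _ = _ := by rw [hv, mul_one, mul_one]

variable (T : E →L[ℝ] E) {a b : ℝ}

lemma le_iInf_inner_apply_self [Nontrivial E] (ha : ∀ v, ‖v‖ = 1 → a ≤ ⟪T v, v⟫_ℝ) :
    a ≤ ⨅ v : Metric.sphere (0 : E) 1, ⟪T v, v⟫_ℝ :=
  have : Nonempty (Metric.sphere (0 : E) 1) :=
    (NormedSpace.sphere_nonempty.mpr zero_le_one).to_subtype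
  le_ciInf fun v => ha v (mem_sphere_zero_iff_norm.mp v.2)

lemma iInf_inner_apply_self_le [Nontrivial E] (ha : ∀ v, ‖v‖ = 1 → a ≤ ⟪T v, v⟫_ℝ)
    (hb : ∀ v, ‖v‖ = 1 → ⟪T v, v⟫_ℝ ≤ b) :
    ⨅ v : Metric.sphere (0 : E) 1, ⟪T v, v⟫_ℝ ≤ b := by
  obtain ⟨v, hv⟩ := exists_norm_eq E zero_le_one
  refine (ciInf_le ?_ (⟨v, mem_sphere_zero_iff_norm.mpr hv⟩ : Metric.sphere (0 : E) 1)).trans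
    (hb v hv)
  exact ⟨a, Set.forall_mem_range.2 fun w => ha w (mem_sphere_zero_iff_norm.mp w.2)⟩

variable [FiniteDimensional ℝ E]

lemma finrank_mul_le_trace (ha : ∀ v, ‖v‖ = 1 → a ≤ ⟪T v, v⟫_ℝ) :
    finrank ℝ E * a ≤ LinearMap.trace ℝ E T.toLinearMap := by
  let e := stdOrthonormalBasis ℝ E
  have := Finset.card_nsmul_le_sum Finset.univ (fun i => ⟪e i, T (e i)⟫_ℝ) a
    fun i _ => real_inner_comm (e i) _ ▸ ha (e i) (e.norm_eq_one i)
  simpa [LinearMap.trace_eq_sum_inner _ e] using this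

lemma trace_le_finrank_mul (hb : ∀ v, ‖v‖ = 1 → ⟪T v, v⟫_ℝ ≤ b) :
    LinearMap.trace ℝ E T.toLinearMap ≤ finrank ℝ E * b := by
  let e := stdOrthonormalBasis ℝ E
  have := Finset.sum_le_card_nsmul Finset.univ (fun i => ⟪e i, T (e i)⟫_ℝ) b
    fun i _ => real_inner_comm (e i) _ ▸ hb (e i) (e.norm_eq_one i)
  simpa [LinearMap.trace_eq_sum_inner _ e] using this

lemma trace_le_inner_apply_self_add (hb : ∀ w, ‖w‖ = 1 → ⟪T w, w⟫_ℝ ≤ b) {v : E}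
    (hv : ‖v‖ = 1) :
    LinearMap.trace ℝ E T.toLinearMap ≤ ⟪T v, v⟫_ℝ + (finrank ℝ E - 1) * b := by
  classical
  have hv' : Orthonormal ℝ ((↑) : ({v} : Set E) → E) := by
    rw [orthonormal_subtype_iff_ite]
    simp [hv]
  obtain ⟨u, e, hvu, he⟩ := hv'.exists_orthonormalBasis_extension
  have hvu : v ∈ u := hvu rfl
  have hcard : finrank ℝ E = u.card := Module.finrank_eq_card_finset_basis e.toBasis
  have hrest : ∑ w ∈ u.erase v, ⟪w, T w⟫_ℝ ≤ (u.erase v).card • b :=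
    Finset.sum_le_card_nsmul _ _ _ fun w hw => real_inner_comm w _ ▸
      hb w (by simpa [he] using e.norm_eq_one ⟨w, Finset.mem_of_mem_erase hw⟩)
  rw [Finset.card_erase_of_mem hvu, nsmul_eq_mul, Nat.cast_sub (Finset.card_pos.2 ⟨v, hvu⟩),
    ← hcard, Nat.cast_one] at hrest
  rw [LinearMap.trace_eq_sum_inner _ e, he]
  simp only [ContinuousLinearMap.coe_coe]
  rw [Finset.sum_coe_sort u (fun w => ⟪w, T w⟫_ℝ), ← Finset.add_sum_erase u _ hvu,
    real_inner_comm]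
  linarith

lemma trace_sub_finrank_sub_one_mul_le_iInf [Nontrivial E]
    (hb : ∀ v, ‖v‖ = 1 → ⟪T v, v⟫_ℝ ≤ b) :
    LinearMap.trace ℝ E T.toLinearMap - (finrank ℝ E - 1) * b ≤
      ⨅ v : Metric.sphere (0 : E) 1, ⟪T v, v⟫_ℝ :=
  le_iInf_inner_apply_self T fun v hv => by
    linarith [trace_le_inner_apply_self_add T hb hv]

lemma trace_sub_two_mul_iInf_mem_Icc [Nontrivial E] (ha : ∀ v, ‖v‖ = 1 → a ≤ ⟪T v, v⟫_ℝ)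
    (hb : ∀ v, ‖v‖ = 1 → ⟪T v, v⟫_ℝ ≤ b) :
    LinearMap.trace ℝ E T.toLinearMap - 2 * ⨅ v : Metric.sphere (0 : E) 1, ⟪T v, v⟫_ℝ ∈
      Icc (finrank ℝ E * a - 2 * b) ((finrank ℝ E - 1) * b - a) := by
  have := finrank_mul_le_trace T ha
  have := iInf_inner_apply_self_le T ha hb
  have := le_iInf_inner_apply_self T ha
  have := trace_sub_finrank_sub_one_mul_le_iInf T hb
  constructor <;> linarith

end RayleighQuotient

section AffineField

variable {n : ℕ}

lemma inner_toEuclideanLin_apply_self_of_transpose_eq_neg {A : Matrix (Fin n) (Fin n) ℝ}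
    (hA : Aᵀ = -A) (v : Euc n) : ⟪toEuclideanLin A v, v⟫_ℝ = 0 := by
  have h := LinearMap.adjoint_inner_left (toEuclideanLin A) v v
  rw [← toEuclideanLin_conjTranspose_eq_adjoint, conjTranspose_eq_transpose_of_trivial, hA,
    map_neg, LinearMap.neg_apply, inner_neg_left] at h
  linarith [real_inner_comm v (toEuclideanLin A v)]

lemma inner_fderiv_apply_self {d : ℝ} {A : Matrix (Fin n) (Fin n) ℝ} (hA : Aᵀ = -A)
    (x₀ : Euc n) {F : Euc n → Euc n} {x : Euc n} (hF : DifferentiableAt ℝ F x) {v : Euc n}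
    (hv : ‖v‖ = 1) :
    ⟪fderiv ℝ (fun y => toEuclideanLin (d • (1 : Matrix (Fin n) (Fin n) ℝ) + A) (y - x₀) + F y)
      x v, v⟫_ℝ = d + ⟪fderiv ℝ F x v, v⟫_ℝ := by
  let L :=
    LinearMap.toContinuousLinearMap (toEuclideanLin (d • (1 : Matrix (Fin n) (Fin n) ℝ) + A))
  have hm : HasFDerivAt
      (fun y => toEuclideanLin (d • (1 : Matrix (Fin n) (Fin n) ℝ) + A) (y - x₀) + F y)
      (L + fderiv ℝ F x) x :=
    (L.hasFDerivAt.comp x ((hasFDerivAt_id x).sub_const x₀)).add hF.hasFDerivAt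
  rw [hm.fderiv]
  simp [L, inner_add_left, inner_smul_left, hv,
    inner_toEuclideanLin_apply_self_of_transpose_eq_neg hA]

lemma inner_fderiv_apply_self_mem_Icc {d : ℝ} {A : Matrix (Fin n) (Fin n) ℝ} (hA : Aᵀ = -A)
    (x₀ : Euc n) {F : Euc n → Euc n} {x : Euc n} (hF : DifferentiableAt ℝ F x) {v : Euc n}
    (hv : ‖v‖ = 1) :
    ⟪fderiv ℝ (fun y => toEuclideanLin (d • (1 : Matrix (Fin n) (Fin n) ℝ) + A) (y - x₀) + F y)
      x v, v⟫_ℝ ∈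
      Icc (d - ‖(1/2 : ℝ) • (fderiv ℝ F x + ContinuousLinearMap.adjoint (fderiv ℝ F x))‖)
        (d + ‖(1/2 : ℝ) • (fderiv ℝ F x + ContinuousLinearMap.adjoint (fderiv ℝ F x))‖) := by
  rw [inner_fderiv_apply_self hA x₀ hF hv]
  have := abs_le.1 (abs_inner_apply_self_le_norm_symmPart (fderiv ℝ F x) hv)
  constructor <;> linarith [this.1, this.2]

end AffineField

section EssentialBounds

variable {α : Type*} [MeasurableSpace α] {μ : Measure α} [(ae μ).NeBot] {f : α → ℝ} {a b : ℝ}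

lemma essSup_le_of_ae_mem_Icc (h : ∀ᵐ x ∂μ, f x ∈ Icc a b) : essSup f μ ≤ b :=
  essSup_le_of_ae_le _ (h.mono fun _ hx => hx.2)
    (isCoboundedUnder_le_of_eventually_le _ (h.mono fun _ hx => hx.1))

lemma le_essInf_of_ae_mem_Icc (h : ∀ᵐ x ∂μ, f x ∈ Icc a b) : a ≤ essInf f μ :=
  le_essInf_of_ae_le _ (h.mono fun _ hx => hx.1)
    (isCoboundedUnder_ge_of_eventually_le _ (h.mono fun _ hx => hx.2))

end EssentialBounds

lemma isBoundedUnder_ae_restrict_of_continuous {X : Type*} [PseudoMetricSpace X] [ProperSpace X]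
    [MeasurableSpace X] (μ : Measure X) {s : Set X} (hs : MeasurableSet s)
    (hsb : Bornology.IsBounded s) {f : X → ℝ} (hf : Continuous f) :
    IsBoundedUnder (· ≤ ·) (ae (μ.restrict s)) f := by
  obtain ⟨C, hC⟩ := hsb.isCompact_closure.exists_bound_of_continuousOn hf.continuousOn
  exact ⟨C, eventually_map.2 <| (ae_restrict_mem hs).mono fun x hx =>
    (le_abs_self _).trans (hC x (subset_closure hx))⟩

theorem stmt4_general {n : ℕ} (hn : 1 ≤ n) (d : ℝ)
    (A : Matrix (Fin n) (Fin n) ℝ) (hskew : Aᵀ = -A) (x₀ : Euc n)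
    (Ω : Set (Euc n)) (hΩo : IsOpen Ω) (hΩb : Bornology.IsBounded Ω) (hne : Ω.Nonempty)
    (F : Euc n → Euc n) (hF : ContDiff ℝ 1 F)
    (hFs : essSup
        (fun x => ‖(1/2 : ℝ) • (fderiv ℝ F x + ContinuousLinearMap.adjoint (fderiv ℝ F x))‖)
        (volume.restrict Ω) < d / n) :
    coneCond
      (fun x => Matrix.toEuclideanLin (d • (1 : Matrix (Fin n) (Fin n) ℝ) + A) (x - x₀) + F x)
      Ω := by
  set m := fun x => toEuclideanLin (d • (1 : Matrix (Fin n) (Fin n) ℝ) + A) (x - x₀) + F x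
  set g := fun x => ‖(1/2 : ℝ) • (fderiv ℝ F x + ContinuousLinearMap.adjoint (fderiv ℝ F x))‖
  set μ := volume.restrict Ω
  have : (ae μ).NeBot := ae_restrict_neBot.2 (hΩo.measure_pos volume hne).ne'
  have : Nonempty (Fin n) := ⟨⟨0, hn⟩⟩
  -- Without an a.e. bound on `g`, `essSup g μ` is a junk value.
  have hg_bdd : IsBoundedUnder (· ≤ ·) (ae μ) g := by
    have hDF := hF.continuous_fderiv one_ne_zero
    exact isBoundedUnder_ae_restrict_of_continuous _ hΩo.measurableSet hΩb
      ((hDF.add (ContinuousLinearMap.adjoint.continuous.comp hDF)).const_smul (1/2 : ℝ)).norm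
  set s := essSup g μ
  have hns : n * s < d := (lt_div_iff₀' (by exact_mod_cast hn)).1 hFs
  have hray : ∀ᵐ x ∂μ, ∀ v : Euc n, ‖v‖ = 1 → ⟪fderiv ℝ m x v, v⟫_ℝ ∈ Icc (d - s) (d + s) := by
    filter_upwards [ae_le_essSup hg_bdd] with x hx v hv
    exact Icc_subset_Icc (by linarith) (by linarith)
      (inner_fderiv_apply_self_mem_Icc hskew x₀ (hF.differentiable one_ne_zero x) hv)
  have hdim : finrank ℝ (Euc n) = n := finrank_euclideanSpace_fin
  have hdiv : ∀ᵐ x ∂μ, vdiv m x ∈ Icc (n * (d - s)) (n * (d + s)) := by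
    filter_upwards [hray] with x hx
    have hlo := finrank_mul_le_trace _ fun v hv => (hx v hv).1
    have hhi := trace_le_finrank_mul _ fun v hv => (hx v hv).2
    rw [hdim] at hlo hhi
    exact ⟨hlo, hhi⟩
  have hcone : ∀ᵐ x ∂μ, vdiv m x - 2 * lamMin m x ∈
      Icc (n * (d - s) - 2 * (d + s)) ((n - 1) * (d + s) - (d - s)) := by
    filter_upwards [hray] with x hx
    have h := trace_sub_two_mul_iInf_mem_Icc _ (fun v hv => (hx v hv).1) fun v hv => (hx v hv).2
    rwa [hdim] at h
  unfold coneCond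
  calc essSup (fun x => vdiv m x - 2 * lamMin m x) μ ≤ (n - 1) * (d + s) - (d - s) :=
        essSup_le_of_ae_mem_Icc hcone
    _ < n * (d - s) := by linarith
    _ ≤ essInf (fun x => vdiv m x) μ := le_essInf_of_ae_mem_Icc hdiv

/-- Nonlinear example: `m(x) = (dI + A)(x - x₀) + F(x)` with `A` skew-symmetric and
`ess sup_Ω ‖(∇F)ˢ‖ < d/n` satisfies the cone condition. -/
theorem stmt4 {n : ℕ} (hn : 1 ≤ n) (d : ℝ) (hd : 0 < d)
    (A : Matrix (Fin n) (Fin n) ℝ) (hskew : Aᵀ = -A) (x₀ : Euc n)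
    (Ω : Set (Euc n)) (hΩo : IsOpen Ω) (hΩb : Bornology.IsBounded Ω) (hne : Ω.Nonempty)
    (F : Euc n → Euc n) (hF : ContDiff ℝ 1 F)
    (hFs : essSup
        (fun x => ‖(1/2 : ℝ) • (fderiv ℝ F x + ContinuousLinearMap.adjoint (fderiv ℝ F x))‖)
        (volume.restrict Ω) < d / n) :
    coneCond
      (fun x => Matrix.toEuclideanLin (d • (1 : Matrix (Fin n) (Fin n) ℝ) + A) (x - x₀) + F x)
      Ω :=
  stmt4_general hn d A hskew x₀ Ω hΩo hΩb hne F hF hFs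
end
end
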